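/- arXiv:1802.08704 — 6 statements merged into one kernel-verified Lean document; each statement's English description precedes it below -/
import Mathlib

section
/- Let S be an additively idempotent semiring and D̄_k = E_{11} + ⋯ + E_{kk}. The map δ_k : UTM_n(S) → UTM_n(S) given by δ_k(A) = A∘D̄_k (Jordan product) is a derivation, i.e., δ_k(A + B) = δ_k(A) + δ_k(B) and δ_k(AB) = δ_k(A)·B + A·δ_k(B) for all upper triangular A, B. -/
/-- `D̄_k = E₁₁ + ⋯ + E_kk` (0-indexed: 1's at diagonal positions `< k`). -/
def Dbar (n k : ℕ) (S : Type*) [Semiring S] : Matrix (Fin n) (Fin n) S :=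
  Matrix.diagonal fun i => if (i : ℕ) < k then 1 else 0

/-- `δ_k(A) = A ∘ D̄_k = A·D̄_k + D̄_k·A` (Jordan product). -/
def deltak (n k : ℕ) (S : Type*) [Semiring S] (A : Matrix (Fin n) (Fin n) S) :
    Matrix (Fin n) (Fin n) S :=
  A * Dbar n k S + Dbar n k S * A

theorem stmt1 {n : ℕ} {S : Type*} [Semiring S]
    (hS : ∀ a : S, a + a = a)
    (k : ℕ) (hk1 : 1 ≤ k) (hk : k ≤ n) :
    (∀ A B : Matrix (Fin n) (Fin n) S,
      deltak n k S (A + B) = deltak n k S A + deltak n k S B) ∧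
    (∀ A B : Matrix (Fin n) (Fin n) S,
      (∀ i j : Fin n, (j : ℕ) < (i : ℕ) → A i j = 0) →
      (∀ i j : Fin n, (j : ℕ) < (i : ℕ) → B i j = 0) →
      deltak n k S (A * B) = deltak n k S A * B + A * deltak n k S B) := by
  constructor
  · intro A B
    simp only [deltak, add_mul, mul_add]
    abel
  · intro A B hA hB
    set D := Dbar n k S with hD
    have key : A * D * B + (A * B * D + D * (A * B)) = A * B * D + D * (A * B) := by
      ext i j
      simp only [Matrix.add_apply, hD, Dbar]
      rw [Matrix.mul_apply, Matrix.mul_diagonal, Matrix.diagonal_mul, Matrix.mul_apply,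
        Finset.sum_mul, Finset.mul_sum, ← Finset.sum_add_distrib, ← Finset.sum_add_distrib]
      refine Finset.sum_congr rfl fun l _ => ?_
      rw [Matrix.mul_diagonal]
      by_cases hi : (i : ℕ) < k
      · simp only [hi, if_true, mul_one, one_mul]
        by_cases hl : (l : ℕ) < k
        · simp only [hl, if_true, mul_one]
          calc A i l * B l j + (A i l * B l j * (if (j:ℕ) < k then 1 else 0) + A i l * B l j)
              = (A i l * B l j + A i l * B l j) + A i l * B l j * (if (j:ℕ) < k then 1 else 0) := by
                abel
            _ = _ := by rw [hS]; abel
        · simp [hl]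
      · by_cases hl : (l : ℕ) < k
        · have : A i l = 0 := hA i l (lt_of_lt_of_le hl (not_lt.mp hi))
          simp [this]
        · simp [hl]
    refine Eq.symm ?_
    calc deltak n k S A * B + A * deltak n k S B
        = (A * D * B + D * (A * B)) + (A * B * D + A * D * B) := by
          simp only [deltak, ← hD, add_mul, mul_add, mul_assoc]
      _ = A * D * B + (A * B * D + D * (A * B)) + A * D * B := by abel
      _ = (A * B * D + D * (A * B)) + A * D * B := by rw [key]
      _ = A * D * B + (A * B * D + D * (A * B)) := by abel
      _ = A * B * D + D * (A * B) := key
      _ = deltak n k S (A * B) := rfl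
end

section
/- Let S be an additively idempotent semiring and D_m = E_{n-m+1,n-m+1} + ⋯ + E_{nn}. The map d_m : UTM_n(S) → UTM_n(S) given by d_m(A) = A∘D_m (Jordan product) is a derivation: d_m(A+B) = d_m(A) + d_m(B) and d_m(AB) = d_m(A)·B + A·d_m(B). -/
/-- `D_m = E_{n-m+1,n-m+1} + ⋯ + E_nn` (0-indexed: 1's at diagonal positions `≥ n - m`). -/
def Dlow (n m : ℕ) (S : Type*) [Semiring S] : Matrix (Fin n) (Fin n) S :=
  Matrix.diagonal fun i => if n - m ≤ (i : ℕ) then 1 else 0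

/-- `d_m(A) = A ∘ D_m = A·D_m + D_m·A` (Jordan product). -/
def dm (n m : ℕ) (S : Type*) [Semiring S] (A : Matrix (Fin n) (Fin n) S) :
    Matrix (Fin n) (Fin n) S :=
  A * Dlow n m S + Dlow n m S * A

/-- Key absorption: `ABD + ADB = ABD` when `B` is upper triangular. -/
lemma absorb {n m : ℕ} {S : Type*} [Semiring S] (hS : ∀ a : S, a + a = a)
    (A B : Matrix (Fin n) (Fin n) S)
    (hB : ∀ i j : Fin n, (j : ℕ) < (i : ℕ) → B i j = 0) :
    A * B * Dlow n m S + A * Dlow n m S * B = A * B * Dlow n m S := by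
  ext i j
  rw [Matrix.add_apply]
  rw [show (A * B * Dlow n m S) i j = (A * B) i j * (if n - m ≤ (j:ℕ) then 1 else 0) from
    Matrix.mul_diagonal ..]
  rw [show (A * Dlow n m S * B) i j = ∑ k, (A i k * (if n - m ≤ (k:ℕ) then 1 else 0)) * B k j by
    rw [Matrix.mul_apply]
    exact Finset.sum_congr rfl fun k _ => by rw [Dlow, Matrix.mul_diagonal]]
  rw [Matrix.mul_apply, Finset.sum_mul, ← Finset.sum_add_distrib]
  refine Finset.sum_congr rfl fun k _ => ?_
  by_cases hk : n - m ≤ (k : ℕ)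
  · by_cases hkj : (j : ℕ) < (k : ℕ)
    · rw [hB k j hkj]; simp
    · have hj : n - m ≤ (j : ℕ) := le_trans hk (not_lt.mp hkj)
      rw [if_pos hk, if_pos hj, mul_one, mul_one, hS]
  · rw [if_neg hk, mul_zero, zero_mul, add_zero]

theorem stmt6 {n : ℕ} {S : Type*} [Semiring S]
    (hS : ∀ a : S, a + a = a)
    (m : ℕ) (hm1 : 1 ≤ m) (hm : m ≤ n) :
    (∀ A B : Matrix (Fin n) (Fin n) S,
      dm n m S (A + B) = dm n m S A + dm n m S B) ∧
    (∀ A B : Matrix (Fin n) (Fin n) S,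
      (∀ i j : Fin n, (j : ℕ) < (i : ℕ) → A i j = 0) →
      (∀ i j : Fin n, (j : ℕ) < (i : ℕ) → B i j = 0) →
      dm n m S (A * B) = dm n m S A * B + A * dm n m S B) := by
  constructor
  · intro A B
    simp only [dm, add_mul, mul_add]
    abel
  · intro A B hA hB
    have key := absorb (m := m) hS A B hB
    simp only [dm, add_mul, mul_add, ← mul_assoc]
    calc A * B * Dlow n m S + Dlow n m S * A * B
        = (A * B * Dlow n m S + A * Dlow n m S * B + A * Dlow n m S * B)
            + Dlow n m S * A * B := by rw [key, key]
      _ = A * Dlow n m S * B + Dlow n m S * A * B +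
            (A * B * Dlow n m S + A * Dlow n m S * B) := by abel
end

section
/- Let S be an additively idempotent semiring and let k, m satisfy k + m ≥ n, so that D̄_k + D_m equals the identity matrix (with entries in {0,1}). Then the composite map A ↦ D̄_k·A·D_m is a derivation on UTM_n(S): it is additive and D̄_k(AB)D_m = (D̄_k A D_m)B + A(D̄_k B D_m). -/
private lemma sandwich {n k m : ℕ} {S : Type*} [Semiring S]
    (M : Matrix (Fin n) (Fin n) S) (i j : Fin n) :
    (Dbar n k S * M * Dlow n m S) i j =
      (if (i : ℕ) < k then 1 else 0) * M i j * (if n - m ≤ (j : ℕ) then 1 else 0) := by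
  unfold Dbar Dlow
  rw [Matrix.mul_diagonal, Matrix.diagonal_mul]

theorem stmt9 {n : ℕ} {S : Type*} [Semiring S]
    (hS : ∀ a : S, a + a = a)
    (k m : ℕ) (hk1 : 1 ≤ k) (hk : k ≤ n) (hm1 : 1 ≤ m) (hm : m ≤ n)
    (hkm : n ≤ k + m) :
    Dbar n k S + Dlow n m S = 1 ∧
    (∀ A B : Matrix (Fin n) (Fin n) S,
      Dbar n k S * (A + B) * Dlow n m S =
        Dbar n k S * A * Dlow n m S + Dbar n k S * B * Dlow n m S) ∧
    (∀ A B : Matrix (Fin n) (Fin n) S,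
      (∀ i j : Fin n, (j : ℕ) < (i : ℕ) → A i j = 0) →
      (∀ i j : Fin n, (j : ℕ) < (i : ℕ) → B i j = 0) →
      Dbar n k S * (A * B) * Dlow n m S =
        (Dbar n k S * A * Dlow n m S) * B + A * (Dbar n k S * B * Dlow n m S)) := by
  have hnm : n - m ≤ k := by omega
  refine ⟨?_, ?_, ?_⟩
  · ext i j
    simp only [Dbar, Dlow, Matrix.add_apply, Matrix.diagonal_apply, Matrix.one_apply]
    by_cases hij : i = j
    · subst hij
      simp only [if_pos rfl]
      by_cases h1 : (i : ℕ) < k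
      · by_cases h2 : n - m ≤ (i : ℕ) <;> simp [h1, h2, hS]
      · have h2 : n - m ≤ (i : ℕ) := by omega
        simp [h1, h2]
    · simp [hij]
  · intro A B
    rw [mul_add, add_mul]
  · intro A B hA hB
    ext i j
    rw [Matrix.add_apply, sandwich, Matrix.mul_apply, Matrix.mul_apply, Matrix.mul_apply]
    simp only [sandwich]
    rw [← Finset.sum_add_distrib, Finset.mul_sum, Finset.sum_mul]
    refine Finset.sum_congr rfl fun l _ => ?_
    by_cases hdi : (i : ℕ) < k
    · by_cases hej : n - m ≤ (j : ℕ)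
      · simp only [if_pos hdi, if_pos hej, one_mul, mul_one]
        by_cases hel : n - m ≤ (l : ℕ)
        · by_cases hdl : (l : ℕ) < k
          · simp [hel, hdl, mul_assoc, hS]
          · simp [hel, hdl, mul_assoc]
        · have hdl : (l : ℕ) < k := by omega
          simp [hel, hdl, mul_assoc]
      · have hB0 : ∀ l' : Fin n, n - m ≤ (l' : ℕ) → B l' j = 0 := fun l' h =>
          hB l' j (by omega)
        simp only [if_neg hej, mul_zero, zero_add]
        by_cases hel : n - m ≤ (l : ℕ)
        · rw [hB0 l hel]; simp
        · simp [hel]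
    · have hA0 : ∀ l' : Fin n, (l' : ℕ) < k → A i l' = 0 := fun l' h =>
        hA i l' (by omega)
      simp only [if_neg hdi, zero_mul, add_zero]
      by_cases hdl : (l : ℕ) < k
      · rw [hA0 l hdl]; simp
      · simp [hdl]
end

section
/- Let S be an additively idempotent semiring and 1 ≤ k ≤ n−1. The map δ(A) = D̄_k·A·D_{n−k} (which replaces by zero all entries of A except those a_{ij} with i ≤ k and j ≥ k+1) is a derivation on UTM_n(S). -/
/-- The product of the complementary derivations: `δ(A) = D̄_k · A · D_{n-k}`. -/
def deltaComp (n k : ℕ) (S : Type*) [Semiring S] (A : Matrix (Fin n) (Fin n) S) :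
    Matrix (Fin n) (Fin n) S :=
  Dbar n k S * A * Dlow n (n - k) S

lemma deltaComp_apply (n k : ℕ) (S : Type*) [Semiring S]
    (A : Matrix (Fin n) (Fin n) S) (i j : Fin n) :
    deltaComp n k S A i j =
      (if (i : ℕ) < k then (1:S) else 0) * A i j *
        (if n - (n - k) ≤ (j : ℕ) then (1:S) else 0) := by
  unfold deltaComp Dbar Dlow
  rw [Matrix.mul_diagonal, Matrix.diagonal_mul]

theorem stmt13 {n : ℕ} {S : Type*} [Semiring S]
    (hS : ∀ a : S, a + a = a)
    (k : ℕ) (hk1 : 1 ≤ k) (hk : k ≤ n - 1) :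
    (∀ A B : Matrix (Fin n) (Fin n) S,
      deltaComp n k S (A + B) = deltaComp n k S A + deltaComp n k S B) ∧
    (∀ A B : Matrix (Fin n) (Fin n) S,
      (∀ i j : Fin n, (j : ℕ) < (i : ℕ) → A i j = 0) →
      (∀ i j : Fin n, (j : ℕ) < (i : ℕ) → B i j = 0) →
      deltaComp n k S (A * B) =
        deltaComp n k S A * B + A * deltaComp n k S B) := by
  have hn : k + 1 ≤ n := by omega
  have hnk : n - (n - k) = k := by omega
  constructor
  · intro A B
    simp only [deltaComp, Matrix.mul_add, Matrix.add_mul]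
  · intro A B hA hB
    ext i j
    rw [Matrix.add_apply, deltaComp_apply, Matrix.mul_apply, Matrix.mul_apply,
      Matrix.mul_apply]
    simp only [deltaComp_apply, hnk]
    by_cases hi : (i : ℕ) < k
    · by_cases hj : k ≤ (j : ℕ)
      · simp only [hi, hj, if_pos, one_mul, mul_one]
        rw [← Finset.sum_add_distrib]
        refine Finset.sum_congr rfl fun l _ => ?_
        by_cases hl : k ≤ (l : ℕ)
        · simp [hl, not_lt.mpr hl]
        · simp [hl, not_le.mp hl]
      · simp only [if_pos hi, if_neg hj, one_mul, mul_zero, Finset.sum_const_zero,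
          add_zero]
        refine Eq.symm (Finset.sum_eq_zero fun l _ => ?_)
        by_cases hl : k ≤ (l : ℕ)
        · rw [hB l j (by omega), mul_zero]
        · simp [hl]
    · simp only [hi, if_neg, zero_mul, mul_zero, Finset.sum_const_zero, zero_add,
        not_false_iff]
      refine Eq.symm (Finset.sum_eq_zero fun l _ => ?_)
      by_cases hl : (l : ℕ) < k
      · rw [hA i l (by omega), zero_mul]
      · simp [hl]
end

section
/- Let S be an additively idempotent semiring. The map D : UTM_n(S) → UTM_n(S) that replaces all diagonal entries of A by zero (D(A)_{ij} = a_{ij} for i < j, D(A)_{ii} = 0) is a derivation, and D equals the sum over k = 1,…,n−1 of the maps A ↦ D̄_k·A·D_{n−k}. -/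
/-- The map that replaces all diagonal entries of `A` by zero. -/
def offDiag {n : ℕ} {S : Type*} [Semiring S] (A : Matrix (Fin n) (Fin n) S) :
    Matrix (Fin n) (Fin n) S :=
  Matrix.of fun i j => if i = j then 0 else A i j

/-!
At an off-diagonal entry, the Leibniz rule for `offDiag` holds term by term: the summand of
index `k` is `a_ik b_kj` on the left and `a_ik b_kj + a_ik b_kj` on the right, except for
`k = i` or `k = j` where one of the two copies is missing. At a diagonal entry both sides vanish,
since the diagonal of a product of upper triangular matrices is the product of the diagonals.

With 0-based indices, the `(i, j)` entry of `D̄_k A D_{n-k}` is `a_ij` if `i < k ≤ j` and `0`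
otherwise, so the sum over `k` is `(j - i) • a_ij`, which is `a_ij` for `i < j` by idempotence.
-/

theorem nsmul_eq_self_of_add_self {M : Type*} [AddMonoid M] {a : M} (ha : a + a = a) {m : ℕ}
    (hm : m ≠ 0) : m • a = a :=
  IsIdempotentElem.pow_eq (M := Multiplicative M) ha hm

namespace Matrix

variable {ι R : Type*} [LinearOrder ι] [Fintype ι] [NonUnitalNonAssocSemiring R]

theorem BlockTriangular.mul_apply_self {A B : Matrix ι ι R} (hA : A.BlockTriangular id)
    (hB : B.BlockTriangular id) (i : ι) : (A * B) i i = A i i * B i i := by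
  rw [mul_apply, Finset.sum_eq_single i]
  · intro k _ hki
    rcases hki.lt_or_gt with hk | hk
    · rw [hA hk, zero_mul]
    · rw [hB hk, mul_zero]
  · simp

end Matrix

open Matrix

section offDiag

variable {n : ℕ} {S : Type*} [Semiring S]

@[simp]
theorem offDiag_apply_self (A : Matrix (Fin n) (Fin n) S) (i : Fin n) : offDiag A i i = 0 := by
  simp [offDiag]

theorem offDiag_apply_of_ne (A : Matrix (Fin n) (Fin n) S) {i j : Fin n} (h : i ≠ j) :
    offDiag A i j = A i j := by
  simp [offDiag, h]

theorem offDiag_add (A B : Matrix (Fin n) (Fin n) S) :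
    offDiag (A + B) = offDiag A + offDiag B := by
  ext i j
  by_cases h : i = j
  · subst h
    simp
  · simp [offDiag_apply_of_ne _ h]

theorem blockTriangular_offDiag {A : Matrix (Fin n) (Fin n) S} (hA : A.BlockTriangular id) :
    (offDiag A).BlockTriangular id :=
  fun i j (hji : j < i) => by rw [offDiag_apply_of_ne _ hji.ne', hA hji]

theorem offDiag_mul_add_mul_offDiag_apply_of_ne (hS : ∀ a : S, a + a = a)
    (A B : Matrix (Fin n) (Fin n) S) {i j : Fin n} (hij : i ≠ j) :
    (offDiag A * B + A * offDiag B) i j = (A * B) i j := by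
  simp only [Matrix.add_apply, mul_apply, ← Finset.sum_add_distrib]
  refine Finset.sum_congr rfl fun k _ => ?_
  by_cases hik : i = k
  · subst hik
    rw [offDiag_apply_self, offDiag_apply_of_ne _ hij, zero_mul, zero_add]
  by_cases hkj : k = j
  · subst hkj
    rw [offDiag_apply_self, offDiag_apply_of_ne _ hik, mul_zero, add_zero]
  rw [offDiag_apply_of_ne _ hik, offDiag_apply_of_ne _ hkj, hS]

theorem offDiag_mul (hS : ∀ a : S, a + a = a) {A B : Matrix (Fin n) (Fin n) S}
    (hA : A.BlockTriangular id) (hB : B.BlockTriangular id) :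
    offDiag (A * B) = offDiag A * B + A * offDiag B := by
  ext i j
  by_cases hij : i = j
  · subst hij
    rw [Matrix.add_apply, (blockTriangular_offDiag hA).mul_apply_self hB,
      hA.mul_apply_self (blockTriangular_offDiag hB)]
    simp
  · rw [offDiag_apply_of_ne _ hij, offDiag_mul_add_mul_offDiag_apply_of_ne hS _ _ hij]

theorem Dbar_mul_mul_Dlow_apply {k : ℕ} (hk : k ≤ n) (A : Matrix (Fin n) (Fin n) S)
    (i j : Fin n) :
    (Dbar n k S * A * Dlow n (n - k) S) i j = if (i : ℕ) < k ∧ k ≤ j then A i j else 0 := by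
  simp only [Dbar, Dlow, mul_diagonal, diagonal_mul, Nat.sub_sub_self hk]
  split_ifs <;> simp_all

theorem offDiag_eq_sum_Dbar_mul_mul_Dlow (hS : ∀ a : S, a + a = a)
    {A : Matrix (Fin n) (Fin n) S} (hA : A.BlockTriangular id) :
    offDiag A = ∑ k ∈ Finset.Icc 1 (n - 1), Dbar n k S * A * Dlow n (n - k) S := by
  ext i j
  have hIoc : {k ∈ Finset.Icc 1 (n - 1) | (i : ℕ) < k ∧ k ≤ j} = Finset.Ioc (i : ℕ) j := by
    ext k
    simp only [Finset.mem_filter, Finset.mem_Icc, Finset.mem_Ioc]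
    omega
  rw [Matrix.sum_apply, Finset.sum_congr rfl fun k hk =>
      Dbar_mul_mul_Dlow_apply (by simp at hk; omega) A i j,
    ← Finset.sum_filter, hIoc, Finset.sum_const, Nat.card_Ioc]
  rcases lt_trichotomy i j with hij | rfl | hji
  · rw [offDiag_apply_of_ne _ hij.ne, nsmul_eq_self_of_add_self (hS _) (by omega)]
  · simp
  · rw [offDiag_apply_of_ne _ hji.ne', hA hji, smul_zero]

end offDiag

theorem stmt14 {n : ℕ} {S : Type*} [Semiring S]
    (hS : ∀ a : S, a + a = a) :
    (∀ A B : Matrix (Fin n) (Fin n) S, offDiag (A + B) = offDiag A + offDiag B) ∧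
    (∀ A B : Matrix (Fin n) (Fin n) S,
      (∀ i j : Fin n, (j : ℕ) < (i : ℕ) → A i j = 0) →
      (∀ i j : Fin n, (j : ℕ) < (i : ℕ) → B i j = 0) →
      offDiag (A * B) = offDiag A * B + A * offDiag B) ∧
    (∀ A : Matrix (Fin n) (Fin n) S,
      (∀ i j : Fin n, (j : ℕ) < (i : ℕ) → A i j = 0) →
      offDiag A = ∑ k ∈ Finset.Icc 1 (n - 1), Dbar n k S * A * Dlow n (n - k) S) :=
  ⟨offDiag_add,
    fun _ _ hA hB => offDiag_mul hS (fun i j h => hA i j h) (fun i j h => hB i j h),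
    fun _ hA => offDiag_eq_sum_Dbar_mul_mul_Dlow hS fun i j h => hA i j h⟩
end

section
/- Let S be an additively idempotent semiring. For any family of pairwise disjoint intervals [i_1, j_1], …, [i_s, j_s] ⊆ {1,…,n}, the map δ on UTM_n(S) that sets to zero all entries a_{pq} of A with both p and q lying in the same interval [i_t, j_t] (and leaves all other entries unchanged) is a derivation. -/
open scoped Classical

/-- Given a family `F` of intervals (given by their endpoint pairs), the map that sets
to zero every entry `A p q` with both `p` and `q` in the same interval of the family. -/
noncomputable def zeroFam {n : ℕ} {S : Type*} [Semiring S]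
    (F : Finset (Fin n × Fin n)) (A : Matrix (Fin n) (Fin n) S) :
    Matrix (Fin n) (Fin n) S :=
  Matrix.of fun i j =>
    if ∃ p ∈ F, p.1 ≤ i ∧ i ≤ p.2 ∧ p.1 ≤ j ∧ j ≤ p.2 then 0 else A i j

theorem stmt15 {n : ℕ} {S : Type*} [Semiring S]
    (hS : ∀ a : S, a + a = a)
    (F : Finset (Fin n × Fin n))
    (hF1 : ∀ p ∈ F, p.1 ≤ p.2)
    (hF2 : ∀ p ∈ F, ∀ q ∈ F, p ≠ q →
      Disjoint (Finset.Icc p.1 p.2) (Finset.Icc q.1 q.2)) :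
    (∀ A B : Matrix (Fin n) (Fin n) S,
      zeroFam F (A + B) = zeroFam F A + zeroFam F B) ∧
    (∀ A B : Matrix (Fin n) (Fin n) S,
      (∀ i j : Fin n, (j : ℕ) < (i : ℕ) → A i j = 0) →
      (∀ i j : Fin n, (j : ℕ) < (i : ℕ) → B i j = 0) →
      zeroFam F (A * B) = zeroFam F A * B + A * zeroFam F B) := by
  constructor
  · intro A B
    ext i j
    simp only [zeroFam, Matrix.of_apply, Matrix.add_apply]
    split_ifs <;> simp
  · intro A B hA hB
    ext i j
    simp only [zeroFam, Matrix.of_apply, Matrix.add_apply, Matrix.mul_apply]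
    by_cases h : ∃ p ∈ F, p.1 ≤ i ∧ i ≤ p.2 ∧ p.1 ≤ j ∧ j ≤ p.2
    · rw [if_pos h]
      obtain ⟨p, hpF, hpi, hip, hpj, hjp⟩ := h
      have h1 : ∀ k : Fin n,
          (if ∃ q ∈ F, q.1 ≤ i ∧ i ≤ q.2 ∧ q.1 ≤ k ∧ k ≤ q.2 then (0:S) else A i k) * B k j
            = 0 := by
        intro k
        by_cases hk1 : p.1 ≤ k
        · by_cases hk2 : k ≤ p.2
          · rw [if_pos ⟨p, hpF, hpi, hip, hk1, hk2⟩, zero_mul]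
          · have hB0 : B k j = 0 := hB k j (by
              have : j < k := lt_of_le_of_lt hjp (lt_of_not_ge hk2)
              exact this)
            rw [hB0, mul_zero]
        · have hA0 : A i k = 0 := hA i k (by
            have : k < i := lt_of_lt_of_le (lt_of_not_ge hk1) hpi
            exact this)
          split_ifs <;> simp [hA0]
      have h2 : ∀ k : Fin n,
          A i k * (if ∃ q ∈ F, q.1 ≤ k ∧ k ≤ q.2 ∧ q.1 ≤ j ∧ j ≤ q.2 then (0:S) else B k j)
            = 0 := by
        intro k
        by_cases hk1 : p.1 ≤ k
        · by_cases hk2 : k ≤ p.2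
          · rw [if_pos ⟨p, hpF, hk1, hk2, hpj, hjp⟩, mul_zero]
          · have hB0 : B k j = 0 := hB k j (lt_of_le_of_lt hjp (lt_of_not_ge hk2))
            split_ifs <;> simp [hB0]
        · have hA0 : A i k = 0 := hA i k (lt_of_lt_of_le (lt_of_not_ge hk1) hpi)
          rw [hA0, zero_mul]
      simp only [h1, h2, Finset.sum_const_zero, add_zero]
    · rw [if_neg h]
      have key : ∀ k : Fin n,
          (if ∃ q ∈ F, q.1 ≤ i ∧ i ≤ q.2 ∧ q.1 ≤ k ∧ k ≤ q.2 then (0:S) else A i k) * B k j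
          + A i k * (if ∃ q ∈ F, q.1 ≤ k ∧ k ≤ q.2 ∧ q.1 ≤ j ∧ j ≤ q.2 then (0:S) else B k j)
          = A i k * B k j := by
        intro k
        by_cases c1 : ∃ q ∈ F, q.1 ≤ i ∧ i ≤ q.2 ∧ q.1 ≤ k ∧ k ≤ q.2
        · by_cases c2 : ∃ q ∈ F, q.1 ≤ k ∧ k ≤ q.2 ∧ q.1 ≤ j ∧ j ≤ q.2
          · exfalso
            obtain ⟨p, hpF, hpi, hip, hpk, hkp⟩ := c1
            obtain ⟨q, hqF, hqk, hkq, hqj, hjq⟩ := c2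
            by_cases hpq : p = q
            · subst hpq
              exact h ⟨p, hpF, hpi, hip, hqj, hjq⟩
            · exact (Finset.disjoint_left.mp (hF2 p hpF q hqF hpq))
                (Finset.mem_Icc.mpr ⟨hpk, hkp⟩) (Finset.mem_Icc.mpr ⟨hqk, hkq⟩)
          · rw [if_pos c1, if_neg c2, zero_mul, zero_add]
        · by_cases c2 : ∃ q ∈ F, q.1 ≤ k ∧ k ≤ q.2 ∧ q.1 ≤ j ∧ j ≤ q.2
          · rw [if_neg c1, if_pos c2, mul_zero, add_zero]
          · rw [if_neg c1, if_neg c2, hS]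
      rw [← Finset.sum_add_distrib]
      exact (Finset.sum_congr rfl fun k _ => key k).symm
end
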